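/- arXiv:1003.4902 — 2 statements merged into one kernel-verified Lean document; each statement's English description precedes it below -/
import Mathlib

section
/- For a Lorenz map f on [a,b]\{c} (increasing on each continuity interval with discontinuity at c, normalized so c=0) and points x, y in the domain, if x < y then the itinerary of x is lexicographically less than or equal to the itinerary of y (with respect to the order L < 0 < R on symbols). -/
open scoped Classical

/-- Symbols `L < O < R` (here `O` stands for the symbol `0`). -/
inductive LSym : Type
  | L : LSym
  | O : LSym
  | R : LSym
  deriving DecidableEq

/-- Numerical value realizing the order `L < O < R`. -/
def LSym.val : LSym → ℕ
  | .L => 0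
  | .O => 1
  | .R => 2

/-- Sequences over `{L,0,R}`. -/
abbrev LSeq : Type := ℕ → LSym

/-- Membership in `Σ`: the symbol `0` occurs only terminally
(we encode a finite sequence `X_0 ... X_{n-1} 0` as the sequence constantly `O` from index `n` on). -/
def InSig (X : LSeq) : Prop := ∀ i j, i ≤ j → X i = LSym.O → X j = LSym.O

/-- `X` is a finite sequence (its terminal symbol `0` occurs). -/
def IsFin (X : LSeq) : Prop := ∃ n, X n = LSym.O

/-- The length `|X|` of a finite sequence (number of symbols before the terminal `0`). -/
noncomputable def len (X : LSeq) : ℕ := if h : IsFin X then Nat.find h else 0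

/-- Strict lexicographic order on sequences, induced by `L < 0 < R`. -/
def SeqLT (X Y : LSeq) : Prop := ∃ n, (∀ i, i < n → X i = Y i) ∧ (X n).val < (Y n).val

/-- Lexicographic order on sequences. -/
def SeqLE (X Y : LSeq) : Prop := SeqLT X Y ∨ X = Y

/-- Iterated shift map `s^k`. -/
def shiftI (k : ℕ) (X : LSeq) : LSeq := fun n => X (n + k)

/-- The periodic infinite repetition `(X̄)^∞` of the finite word `X̄ = X_0 ... X_{|X|-1}`. -/
noncomputable def per (X : LSeq) : LSeq := fun n => X (n % len X)

/-- `K` satisfies the Hubbard–Sparrow shift conditions relative to the pair `(P,Q)`: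
`K_i = L → s^i K ≤ P` and `K_i = R → s^i K ≥ Q`, strict whenever `P` (resp. `Q`) is finite. -/
def SigmaPlus (P Q K : LSeq) : Prop :=
  ∀ i, (K i = LSym.L → SeqLE (shiftI i K) P ∧ (IsFin P → shiftI i K ≠ P)) ∧
       (K i = LSym.R → SeqLE Q (shiftI i K) ∧ (IsFin Q → shiftI i K ≠ Q))

/-- Admissibility of a pair `(X,Y)` (combinatorial Hubbard–Sparrow conditions). -/
def Adm (X Y : LSeq) : Prop :=
  InSig X ∧ InSig Y ∧ X 0 = LSym.L ∧ Y 0 = LSym.R ∧ SigmaPlus X Y X ∧ SigmaPlus X Y Y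

/-- Word substituted for a symbol in the `*`-product: `L ↦ X̄`, `R ↦ Ȳ`, `O ↦ ε`. -/
def wd (xb yb : List LSym) : LSym → List LSym
  | LSym.L => xb
  | LSym.R => yb
  | LSym.O => []

/-- Cumulative lengths of the words substituted for `U_0, ..., U_{k-1}`. -/
def cum (xb yb : List LSym) (U : LSeq) : ℕ → ℕ
  | 0 => 0
  | k + 1 => cum xb yb U k + (wd xb yb (U k)).length

/-- The `*`-product at the level of words: replace each `L` in `U` by `xb`
and each `R` by `yb` (with trailing `0`'s if the result is finite). -/
noncomputable def starW (xb yb : List LSym) (U : LSeq) : LSeq := fun n =>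
  if h : ∃ k, n < cum xb yb U (k + 1) then
    (wd xb yb (U (Nat.find h))).getD (n - cum xb yb U (Nat.find h)) LSym.O
  else LSym.O

/-- The finite word `X̄ = X_0 ... X_{|X|-1}` of a finite sequence `X`. -/
noncomputable def bar (X : LSeq) : List LSym := (List.range (len X)).map X

/-- The `*`-product `(X,Y)*U`. -/
noncomputable def starS (X Y U : LSeq) : LSeq := starW (bar X) (bar Y) U

/-- Concatenation of a finite word with a sequence. -/
def cat (w : List LSym) (K : LSeq) : LSeq := fun n =>
  if h : n < w.length then w.get ⟨n, h⟩ else K (n - w.length)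

/-- The suffix word `Z_p ... Z_{|Z|-1}`. -/
noncomputable def sufW (Z : LSeq) (p : ℕ) : List LSym :=
  (List.range (len Z - p)).map fun i => Z (p + i)

/-- The suffix `Z_p ... Z_{|Z|-1} 0` as an element of `Σ`. -/
noncomputable def sufSeq (Z : LSeq) (p : ℕ) : LSeq := fun n =>
  if n < len Z - p then Z (p + n) else LSym.O

/-- `n_L(U)`: number of `L`'s among `U_0, ..., U_{|U|-1}`. -/
noncomputable def nL (U : LSeq) : ℕ := ((List.range (len U)).map U).count LSym.L

/-- `n_R(U)`: number of `R`'s among `U_0, ..., U_{|U|-1}`. -/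
noncomputable def nR (U : LSeq) : ℕ := ((List.range (len U)).map U).count LSym.R

/-- Number of `L`'s among `U_0, ..., U_{k-1}`. -/
noncomputable def nLUpTo (U : LSeq) (k : ℕ) : ℕ := ((List.range k).map U).count LSym.L

/-- Number of `R`'s among `U_0, ..., U_{k-1}`. -/
noncomputable def nRUpTo (U : LSeq) (k : ℕ) : ℕ := ((List.range k).map U).count LSym.R

/-- Itinerary of `x` under `f`: `j`-th symbol is `L` if `f^j(x) < 0`, `R` if `f^j(x) > 0`,
and the sequence terminates with `0` as soon as some iterate hits `0`. -/
noncomputable def itin (f : ℝ → ℝ) (x : ℝ) : LSeq := fun j =>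
  if ∃ k, k ≤ j ∧ f^[k] x = 0 then LSym.O
  else if f^[j] x < 0 then LSym.L else LSym.R

/-- `f` is a Lorenz map on `[a,b] \ {0}`: increasing and continuous on each of
`[a,0)` and `(0,b]`, boundary anchored, mapping the domain into `[a,b]`. -/
structure LorenzOn (f : ℝ → ℝ) (a b : ℝ) : Prop where
  ha : a < 0
  hb : 0 < b
  mono_left : StrictMonoOn f (Set.Ico a 0)
  mono_right : StrictMonoOn f (Set.Ioc 0 b)
  cont_left : ContinuousOn f (Set.Ico a 0)
  cont_right : ContinuousOn f (Set.Ioc 0 b)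
  anchor_left : f a = a
  anchor_right : f b = b
  maps_into : ∀ x, x ∈ Set.Icc a b → x ≠ 0 → f x ∈ Set.Icc a b

lemma itin_O_iff (f : ℝ → ℝ) (x : ℝ) (n : ℕ) :
    itin f x n = LSym.O ↔ ∃ k, k ≤ n ∧ f^[k] x = 0 := by
  unfold itin
  split_ifs with h h2 <;> simp_all

lemma itin_of_not (f : ℝ → ℝ) (x : ℝ) (n : ℕ) (h : ¬ ∃ k, k ≤ n ∧ f^[k] x = 0) :
    itin f x n = if f^[n] x < 0 then LSym.L else LSym.R := by
  unfold itin; rw [if_neg h]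

lemma iter_lt (f : ℝ → ℝ) (hf : LorenzOn f (-1) 1)
    (x y : ℝ) (hx : x ∈ Set.Icc (-1 : ℝ) 1) (hy : y ∈ Set.Icc (-1 : ℝ) 1)
    (hxy : x < y) :
    ∀ n, (∀ i, i < n → itin f x i = itin f y i ∧ itin f x i ≠ LSym.O) →
      f^[n] x < f^[n] y ∧ f^[n] x ∈ Set.Icc (-1 : ℝ) 1 ∧ f^[n] y ∈ Set.Icc (-1 : ℝ) 1 := by
  intro n
  induction n with
  | zero => intro _; exact ⟨hxy, hx, hy⟩
  | succ n ih =>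
    intro h
    obtain ⟨hlt, hxI, hyI⟩ := ih (fun i hi => h i (Nat.lt_succ_of_lt hi))
    obtain ⟨heq, hneO⟩ := h n (Nat.lt_succ_self n)
    have hxc : ¬ ∃ k, k ≤ n ∧ f^[k] x = 0 := fun hc => hneO ((itin_O_iff f x n).2 hc)
    have hyneO : itin f y n ≠ LSym.O := heq ▸ hneO
    have hyc : ¬ ∃ k, k ≤ n ∧ f^[k] y = 0 := fun hc => hyneO ((itin_O_iff f y n).2 hc)
    have hx0 : f^[n] x ≠ 0 := fun h0 => hxc ⟨n, le_refl n, h0⟩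
    have hy0 : f^[n] y ≠ 0 := fun h0 => hyc ⟨n, le_refl n, h0⟩
    have hxe := itin_of_not f x n hxc
    have hye := itin_of_not f y n hyc
    rw [Function.iterate_succ_apply', Function.iterate_succ_apply']
    by_cases hneg : f^[n] x < 0
    · have hyneg : f^[n] y < 0 := by
        by_contra hc
        rw [heq, hye, if_neg hc] at hxe
        rw [if_pos hneg] at hxe
        exact LSym.noConfusion hxe
      have hmx : f^[n] x ∈ Set.Ico (-1 : ℝ) 0 := ⟨hxI.1, hneg⟩
      have hmy : f^[n] y ∈ Set.Ico (-1 : ℝ) 0 := ⟨hyI.1, hyneg⟩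
      exact ⟨hf.mono_left hmx hmy hlt,
        hf.maps_into _ hxI hx0, hf.maps_into _ hyI hy0⟩
    · have hxpos : 0 < f^[n] x := lt_of_le_of_ne (not_lt.1 hneg) (Ne.symm hx0)
      have hypos : 0 < f^[n] y := lt_trans hxpos hlt
      have hmx : f^[n] x ∈ Set.Ioc (0 : ℝ) 1 := ⟨hxpos, hxI.2⟩
      have hmy : f^[n] y ∈ Set.Ioc (0 : ℝ) 1 := ⟨hypos, hyI.2⟩
      exact ⟨hf.mono_right hmx hmy hlt,
        hf.maps_into _ hxI hx0, hf.maps_into _ hyI hy0⟩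

/-- For a Lorenz map `f` (normalized on `[-1,1]`, discontinuity at `0`)
and points `x, y` in the domain, `x < y` implies `i_f(x) ≤ i_f(y)` lexicographically. -/
theorem itin_monotone (f : ℝ → ℝ) (hf : LorenzOn f (-1) 1)
    (x y : ℝ) (hx : x ∈ Set.Icc (-1 : ℝ) 1) (hy : y ∈ Set.Icc (-1 : ℝ) 1)
    (hx0 : x ≠ 0) (hy0 : y ≠ 0) (hxy : x < y) :
    SeqLE (itin f x) (itin f y) := by
  by_cases heq : itin f x = itin f y
  · exact Or.inr heq
  · left
    have hex : ∃ n, itin f x n ≠ itin f y n := by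
      by_contra hc
      push_neg at hc
      exact heq (funext hc)
    classical
    set n := Nat.find hex with hn
    have hne : itin f x n ≠ itin f y n := Nat.find_spec hex
    have hagree : ∀ i, i < n → itin f x i = itin f y i := by
      intro i hi
      by_contra hc
      exact absurd (Nat.find_le hc) (not_le.2 hi)
    have hpre : ∀ i, i < n → itin f x i = itin f y i ∧ itin f x i ≠ LSym.O := by
      intro i hi
      refine ⟨hagree i hi, fun hO => hne ?_⟩
      obtain ⟨k, hk, h0⟩ := (itin_O_iff f x i).1 hO
      have hyO : itin f y i = LSym.O := (hagree i hi) ▸ hO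
      obtain ⟨k', hk', h0'⟩ := (itin_O_iff f y i).1 hyO
      rw [(itin_O_iff f x n).2 ⟨k, le_trans hk (le_of_lt hi), h0⟩,
        (itin_O_iff f y n).2 ⟨k', le_trans hk' (le_of_lt hi), h0'⟩]
    obtain ⟨hlt, hxI, hyI⟩ := iter_lt f hf x y hx hy hxy n hpre
    refine ⟨n, hagree, ?_⟩
    have hypre0 : ∀ k, k < n → f^[k] y ≠ 0 := by
      intro k hk h0
      exact (hpre k hk).2 ((hagree k hk) ▸ (itin_O_iff f y k).2 ⟨k, le_refl k, h0⟩)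
    by_cases hxc : ∃ k, k ≤ n ∧ f^[k] x = 0
    · -- x hits zero exactly at n
      have hx0 : f^[n] x = 0 := by
        obtain ⟨k, hk, h0⟩ := hxc
        rcases lt_or_eq_of_le hk with hk' | hk'
        · exact absurd ((itin_O_iff f x k).2 ⟨k, le_refl k, h0⟩) (hpre k hk').2
        · exact hk' ▸ h0
      have hxO : itin f x n = LSym.O := (itin_O_iff f x n).2 ⟨n, le_refl n, hx0⟩
      have hypos : 0 < f^[n] y := hx0 ▸ hlt
      have hyc : ¬ ∃ k, k ≤ n ∧ f^[k] y = 0 := by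
        rintro ⟨k, hk, h0⟩
        rcases lt_or_eq_of_le hk with hk' | hk'
        · exact hypre0 k hk' h0
        · exact absurd (hk' ▸ h0) (ne_of_gt hypos)
      have hyR : itin f y n = LSym.R := by
        rw [itin_of_not f y n hyc, if_neg (not_lt.2 (le_of_lt hypos))]
      rw [hxO, hyR]; decide
    · have hxe := itin_of_not f x n hxc
      have hx0 : f^[n] x ≠ 0 := fun h0 => hxc ⟨n, le_refl n, h0⟩
      by_cases hneg : f^[n] x < 0
      · rw [if_pos hneg] at hxe
        rw [hxe]
        cases hY : itin f y n with
        | L => exact absurd (hxe.trans hY.symm) hne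
        | O => decide
        | R => decide
      · have hxpos : 0 < f^[n] x := lt_of_le_of_ne (not_lt.1 hneg) (Ne.symm hx0)
        have hypos : 0 < f^[n] y := lt_trans hxpos hlt
        have hyc : ¬ ∃ k, k ≤ n ∧ f^[k] y = 0 := by
          rintro ⟨k, hk, h0⟩
          rcases lt_or_eq_of_le hk with hk' | hk'
          · exact hypre0 k hk' h0
          · exact absurd (hk' ▸ h0) (ne_of_gt hypos)
        have hyR : itin f y n = LSym.R := by
          rw [itin_of_not f y n hyc, if_neg (not_lt.2 (le_of_lt hypos))]
        rw [if_neg hneg] at hxe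
        exact absurd (hxe.trans hyR.symm) hne
end

section
/- For a Lorenz map f and points x, y in its domain, if the itinerary of x is strictly lexicographically less than the itinerary of y, then x < y. -/
open scoped Classical

lemma itin_zero (f : ℝ → ℝ) (x : ℝ) :
    itin f x 0 = if x = 0 then LSym.O else if x < 0 then LSym.L else LSym.R := by
  have hiff : (∃ k, k ≤ 0 ∧ f^[k] x = 0) ↔ x = 0 := by
    constructor
    · rintro ⟨k, hk, hz⟩
      obtain rfl : k = 0 := Nat.le_zero.mp hk
      simpa using hz
    · intro h; exact ⟨0, le_rfl, by simpa⟩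
  simp only [itin, Function.iterate_zero, id_eq, hiff]
  congr

lemma itin_shift (f : ℝ → ℝ) (x : ℝ) (hx0 : x ≠ 0) (j : ℕ) :
    itin f (f x) j = itin f x (j + 1) := by
  have hiff : (∃ k, k ≤ j ∧ f^[k] (f x) = 0) ↔ (∃ k, k ≤ j + 1 ∧ f^[k] x = 0) := by
    constructor
    · rintro ⟨k, hk, hz⟩
      exact ⟨k + 1, by omega, by rwa [Function.iterate_succ_apply]⟩
    · rintro ⟨k, hk, hz⟩
      match k with
      | 0 => exact absurd (by simpa using hz) hx0
      | m + 1 => exact ⟨m, by omega, by rwa [Function.iterate_succ_apply] at hz⟩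
  simp only [itin, hiff, Function.iterate_succ_apply]
  congr

lemma lt_of_itin_aux (f : ℝ → ℝ) (hf : LorenzOn f (-1) 1) :
    ∀ n : ℕ, ∀ x y : ℝ, x ∈ Set.Icc (-1 : ℝ) 1 → y ∈ Set.Icc (-1 : ℝ) 1 →
      (∀ i, i < n → itin f x i = itin f y i) →
      (itin f x n).val < (itin f y n).val → x < y := by
  intro n
  induction n with
  | zero =>
    intro x y hx hy _ hval
    rw [itin_zero, itin_zero] at hval
    by_cases hx0 : x = 0
    · by_cases hy0 : y = 0
      · simp [hx0, hy0, LSym.val] at hval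
      · by_cases hyneg : y < 0
        · simp [hx0, hy0, hyneg, LSym.val] at hval
        · exact hx0 ▸ lt_of_le_of_ne (not_lt.mp hyneg) (Ne.symm hy0)
    · by_cases hxneg : x < 0
      · by_cases hy0 : y = 0
        · exact hy0 ▸ hxneg
        · by_cases hyneg : y < 0
          · simp [hx0, hy0, hxneg, hyneg, LSym.val] at hval
          · exact hxneg.trans (lt_of_le_of_ne (not_lt.mp hyneg) (Ne.symm hy0))
      · by_cases hy0 : y = 0 <;> by_cases hyneg : y < 0 <;>
          simp [hx0, hxneg, hy0, hyneg, LSym.val] at hval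
  | succ n ih =>
    intro x y hx hy hpre hval
    have h0 := hpre 0 (Nat.succ_pos n)
    by_cases hx0 : x = 0
    · -- all symbols of x are O; forces y = 0 and contradiction
      have hxall : ∀ j, itin f x j = LSym.O := fun j => by
        simp only [itin]
        rw [if_pos ⟨0, Nat.zero_le j, by simpa using hx0⟩]
      have hy0 : y = 0 := by
        have hYO : itin f y 0 = LSym.O := h0 ▸ hxall 0
        rw [itin_zero] at hYO
        by_contra h
        rw [if_neg h] at hYO
        split_ifs at hYO <;> simp at hYO
      have hyall : ∀ j, itin f y j = LSym.O := fun j => by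
        simp only [itin]
        rw [if_pos ⟨0, Nat.zero_le j, by simpa using hy0⟩]
      rw [hxall (n + 1), hyall (n + 1)] at hval
      simp [LSym.val] at hval
    · have hXsym : itin f x 0 = if x < 0 then LSym.L else LSym.R := by
        rw [itin_zero, if_neg hx0]
      by_cases hxneg : x < 0
      · -- both negative
        have hXL : itin f x 0 = LSym.L := by rw [hXsym, if_pos hxneg]
        have hYL : itin f y 0 = LSym.L := h0 ▸ hXL
        have hyneg : y < 0 := by
          rw [itin_zero] at hYL
          split_ifs at hYL with h1 h2 <;> first | assumption | simp at hYL
        have hy0 : y ≠ 0 := ne_of_lt hyneg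
        have hfx := hf.maps_into x hx hx0
        have hfy := hf.maps_into y hy hy0
        have hlt : f x < f y := by
          refine ih (f x) (f y) hfx hfy (fun i hi => ?_) ?_
          · rw [itin_shift f x hx0, itin_shift f y hy0]
            exact hpre (i + 1) (by omega)
          · rw [itin_shift f x hx0, itin_shift f y hy0]
            exact hval
        exact (hf.mono_left.lt_iff_lt ⟨hx.1, hxneg⟩ ⟨hy.1, hyneg⟩).mp hlt
      · -- both positive
        have hxpos : 0 < x := lt_of_le_of_ne (not_lt.mp hxneg) (Ne.symm hx0)
        have hXR : itin f x 0 = LSym.R := by rw [hXsym, if_neg hxneg]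
        have hYR : itin f y 0 = LSym.R := h0 ▸ hXR
        have hypos : 0 < y := by
          rcases lt_trichotomy y 0 with h' | h' | h'
          · rw [itin_zero, if_neg (ne_of_lt h'), if_pos h'] at hYR
            exact absurd hYR (by decide)
          · rw [itin_zero, if_pos h'] at hYR
            exact absurd hYR (by decide)
          · exact h'
        have hy0 : y ≠ 0 := ne_of_gt hypos
        have hfx := hf.maps_into x hx hx0
        have hfy := hf.maps_into y hy hy0
        have hlt : f x < f y := by
          refine ih (f x) (f y) hfx hfy (fun i hi => ?_) ?_
          · rw [itin_shift f x hx0, itin_shift f y hy0]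
            exact hpre (i + 1) (by omega)
          · rw [itin_shift f x hx0, itin_shift f y hy0]
            exact hval
        exact (hf.mono_right.lt_iff_lt ⟨hxpos, hx.2⟩ ⟨hypos, hy.2⟩).mp hlt

/-- For a Lorenz map `f` and points `x, y` in its domain,
`i_f(x) < i_f(y)` lexicographically implies `x < y`. -/
theorem lt_of_itin_lt (f : ℝ → ℝ) (hf : LorenzOn f (-1) 1)
    (x y : ℝ) (hx : x ∈ Set.Icc (-1 : ℝ) 1) (hy : y ∈ Set.Icc (-1 : ℝ) 1)
    (hx0 : x ≠ 0) (hy0 : y ≠ 0) (h : SeqLT (itin f x) (itin f y)) :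
    x < y := by
  obtain ⟨n, hpre, hval⟩ := h
  exact lt_of_itin_aux f hf n x y hx hy hpre hval
end
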